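/- Let k be a nonnegative integer, let f : ℍ → ℂ be holomorphic, and let p ∈ ℍ with y = Im p. Then the function F : 𝔻 → ℂ defined by F(w) = f(z(p;w))·(1−w)^{−k} is holomorphic on the open unit disc 𝔻, and its n-th Taylor coefficient at 0 equals b_n = ((∂^n f)(p)/n!)·(−4πy)^n, where ∂^n f denotes the n-th iterated Shimura–Maass derivative of f of base weight k. In particular, f admits the expansion f(z) = (1−w)^k · Σ_{n=0}^{∞} b_n · w^n with w = w(p;z), valid for every z ∈ ℍ. -/

import Mathlib

open Complex

/-- The map `w(p; ·) : z ↦ (z − p)/(z − conj p)` from the upper half-plane to the unit disc. -/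
noncomputable def wmap (p z : ℂ) : ℂ := (z - p) / (z - (starRingEnd ℂ) p)

/-- The map `z(p; ·) : w ↦ (conj p · w − p)/(w − 1)` from the unit disc to the upper half-plane. -/
noncomputable def zmap (p w : ℂ) : ℂ := ((starRingEnd ℂ) p * w - p) / (w - 1)

/-- The Wirtinger derivative `∂_z = (1/2)(∂/∂x − i ∂/∂y)` of `f : ℂ → ℂ` at `z`. -/
noncomputable def wirtingerDeriv (f : ℂ → ℂ) (z : ℂ) : ℂ :=
  (1 / 2) * (fderiv ℝ f z 1 - Complex.I * fderiv ℝ f z Complex.I)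

/-- The iterated Shimura–Maass derivative `∂^n f` of base weight `k`. -/
noncomputable def smIter (k : ℤ) (f : ℂ → ℂ) : ℕ → ℂ → ℂ
  | 0 => f
  | n + 1 => fun z => (1 / (2 * (Real.pi : ℂ) * Complex.I)) *
      (wirtingerDeriv (smIter k f n) z +
        ((k : ℂ) + 2 * n) * smIter k f n z / (z - (starRingEnd ℂ) z))

/-!
Put `F_{g,m}(w) = g(z(p;w)) (1 - w)^{-m}`. Since `z(p;·)' = (p - p̄)/(1 - w)²`, the derivative is
`F_{g,m}' = (p - p̄) F_{g',m+2} + m F_{g,m+1}`. On the other side, for holomorphic `g` the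
Shimura–Maass iterates obey the same recursion,
`2πi ∂^{n+1}_m g = ∂^n_{m+2} g' + m ∂^n_{m+1} g / (z - z̄)`, because the weight-`a` operator turns
`h / (z - z̄)` into `(∂_{a-1} h) / (z - z̄)`. Induction on `n` then gives
`F_{g,m}^{(n)}(0) = ∂^n_m g(p) · (2πi (p - p̄))^n` with `2πi (p - p̄) = -4πy`, and the expansion
of `f` is the Taylor series of `F_{f,k}` on the disc evaluated at `w(p;z)`.
-/

open ComplexConjugate Filter Topology
open UpperHalfPlane (isOpen_upperHalfPlaneSet)
open scoped ContDiff

local notation "ℍₒ" => UpperHalfPlane.upperHalfPlaneSet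

section Wirtinger

variable {f g : ℂ → ℂ} {z : ℂ}

lemma wirtingerDeriv_congr (h : f =ᶠ[𝓝 z] g) : wirtingerDeriv f z = wirtingerDeriv g z := by
  rw [wirtingerDeriv, wirtingerDeriv, h.fderiv_eq]

lemma wirtingerDeriv_add (hf : DifferentiableAt ℝ f z) (hg : DifferentiableAt ℝ g z) :
    wirtingerDeriv (fun w => f w + g w) z = wirtingerDeriv f z + wirtingerDeriv g z := by
  simp only [wirtingerDeriv, fderiv_fun_add hf hg, add_apply]
  ring

lemma wirtingerDeriv_const_mul (c : ℂ) (hf : DifferentiableAt ℝ f z) :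
    wirtingerDeriv (fun w => c * f w) z = c * wirtingerDeriv f z := by
  simp only [wirtingerDeriv, fderiv_const_mul hf c, smul_apply, smul_eq_mul]
  ring

lemma wirtingerDeriv_mul (hf : DifferentiableAt ℝ f z) (hg : DifferentiableAt ℝ g z) :
    wirtingerDeriv (fun w => f w * g w) z =
      f z * wirtingerDeriv g z + g z * wirtingerDeriv f z := by
  simp only [wirtingerDeriv, fderiv_fun_mul hf hg, add_apply, smul_apply, smul_eq_mul]
  ring

lemma wirtingerDeriv_comp (hg : DifferentiableAt ℂ g (f z)) (hf : DifferentiableAt ℝ f z) :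
    wirtingerDeriv (g ∘ f) z = deriv g (f z) * wirtingerDeriv f z := by
  have h := (hg.hasDerivAt.hasFDerivAt.restrictScalars ℝ).comp z hf.hasFDerivAt
  simp only [wirtingerDeriv, h.fderiv, ContinuousLinearMap.comp_apply,
    ContinuousLinearMap.coe_restrictScalars', ContinuousLinearMap.toSpanSingleton_apply,
    smul_eq_mul]
  ring

lemma wirtingerDeriv_id : wirtingerDeriv id z = 1 := by
  simp only [wirtingerDeriv, fderiv_id, ContinuousLinearMap.id_apply]
  linear_combination (-1 / 2 : ℂ) * I_sq

lemma wirtingerDeriv_eq_deriv (hf : DifferentiableAt ℂ f z) : wirtingerDeriv f z = deriv f z := by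
  simpa [wirtingerDeriv_id] using wirtingerDeriv_comp (f := id) hf differentiableAt_id

lemma differentiableAt_sub_conj : DifferentiableAt ℝ (fun w : ℂ => w - conj w) z :=
  differentiableAt_id.sub (conjCLE : ℂ →L[ℝ] ℂ).differentiableAt

lemma wirtingerDeriv_sub_conj : wirtingerDeriv (fun w => w - conj w) z = 1 := by
  have h : HasFDerivAt (fun w => w - conj w)
      (ContinuousLinearMap.id ℝ ℂ - (conjCLE : ℂ →L[ℝ] ℂ)) z :=
    (hasFDerivAt_id z).sub (conjCLE : ℂ →L[ℝ] ℂ).hasFDerivAt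
  simp only [wirtingerDeriv, h.fderiv, sub_apply, ContinuousLinearMap.id_apply,
    ContinuousLinearEquiv.coe_coe, conjCLE_apply, map_one, conj_I]
  linear_combination (-1 : ℂ) * I_sq

lemma sub_conj_ne_zero (hz : z.im ≠ 0) : z - conj z ≠ 0 := by
  simp [sub_conj, hz, I_ne_zero]

lemma wirtingerDeriv_inv_sub_conj (hz : z.im ≠ 0) :
    wirtingerDeriv (fun w => (w - conj w)⁻¹) z = -((z - conj z) ^ 2)⁻¹ := by
  have h := wirtingerDeriv_comp (g := Inv.inv) (f := fun w => w - conj w)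
    (differentiableAt_inv (sub_conj_ne_zero hz)) differentiableAt_sub_conj
  rwa [wirtingerDeriv_sub_conj, deriv_inv, mul_one] at h

end Wirtinger

noncomputable def smDeriv (a : ℂ) (h : ℂ → ℂ) : ℂ → ℂ := fun z =>
  (1 / (2 * (Real.pi : ℂ) * I)) * (wirtingerDeriv h z + a * h z / (z - conj z))

lemma smIter_succ (k : ℤ) (f : ℂ → ℂ) (n : ℕ) :
    smIter k f (n + 1) = smDeriv ((k : ℂ) + 2 * n) (smIter k f n) := rfl

section smDeriv

variable {a : ℂ} {g h : ℂ → ℂ} {z : ℂ}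

lemma smDeriv_congr (hgh : g =ᶠ[𝓝 z] h) : smDeriv a g z = smDeriv a h z := by
  rw [smDeriv, smDeriv, wirtingerDeriv_congr hgh, hgh.eq_of_nhds]

lemma smDeriv_add (hg : DifferentiableAt ℝ g z) (hh : DifferentiableAt ℝ h z) :
    smDeriv a (fun w => g w + h w) z = smDeriv a g z + smDeriv a h z := by
  simp only [smDeriv, wirtingerDeriv_add hg hh]
  ring

lemma smDeriv_const_mul (c : ℂ) (hh : DifferentiableAt ℝ h z) :
    smDeriv a (fun w => c * h w) z = c * smDeriv a h z := by
  simp only [smDeriv, wirtingerDeriv_const_mul c hh]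
  ring

lemma smDeriv_eq_of_differentiableAt (hh : DifferentiableAt ℂ h z) :
    smDeriv a h z = (1 / (2 * (Real.pi : ℂ) * I)) * (deriv h z + a * h z / (z - conj z)) := by
  rw [smDeriv, wirtingerDeriv_eq_deriv hh]

lemma smDeriv_mul_inv_sub_conj (hh : DifferentiableAt ℝ h z) (hz : z.im ≠ 0) :
    smDeriv a (fun w => h w * (w - conj w)⁻¹) z = smDeriv (a - 1) h z * (z - conj z)⁻¹ := by
  have hinv : DifferentiableAt ℝ (fun w : ℂ => (w - conj w)⁻¹) z :=
    differentiableAt_sub_conj.inv (sub_conj_ne_zero hz)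
  have hne := sub_conj_ne_zero hz
  simp only [smDeriv, wirtingerDeriv_mul hh hinv, wirtingerDeriv_inv_sub_conj hz]
  field_simp
  ring

lemma contDiffOn_smDeriv (hh : ContDiffOn ℝ ∞ h ℍₒ) : ContDiffOn ℝ ∞ (smDeriv a h) ℍₒ := by
  have hdh := hh.fderiv_of_isOpen (m := ∞) isOpen_upperHalfPlaneSet (by simp)
  have hW : ContDiffOn ℝ ∞ (wirtingerDeriv h) ℍₒ :=
    contDiffOn_const.mul ((hdh.clm_apply contDiffOn_const).sub
      (contDiffOn_const.mul (hdh.clm_apply contDiffOn_const)))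
  have hsub : ContDiff ℝ ∞ (fun w : ℂ => w - conj w) :=
    contDiff_id.sub (conjCLE : ℂ →L[ℝ] ℂ).contDiff
  unfold smDeriv
  simp only [div_eq_mul_inv]
  exact contDiffOn_const.mul (hW.add ((contDiffOn_const.mul hh).mul
    (hsub.contDiffOn.inv fun w hw => sub_conj_ne_zero (ne_of_gt hw))))

end smDeriv

lemma contDiffOn_smIter {f : ℂ → ℂ} (hf : DifferentiableOn ℂ f ℍₒ) (k : ℤ) (n : ℕ) :
    ContDiffOn ℝ ∞ (smIter k f n) ℍₒ := by
  induction n with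
  | zero => exact (hf.contDiffOn isOpen_upperHalfPlaneSet).restrict_scalars ℝ
  | succ n ih => exact contDiffOn_smDeriv ih

lemma differentiableAt_smIter {f : ℂ → ℂ} (hf : DifferentiableOn ℂ f ℍₒ) (k : ℤ) (n : ℕ)
    {z : ℂ} (hz : z ∈ ℍₒ) : DifferentiableAt ℝ (smIter k f n) z :=
  ((contDiffOn_smIter hf k n).contDiffAt (isOpen_upperHalfPlaneSet.mem_nhds hz)).differentiableAt
    (by simp)

lemma smIter_succ_eq_smIter_deriv {f : ℂ → ℂ} (hf : DifferentiableOn ℂ f ℍₒ) (k : ℤ) (n : ℕ)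
    {z : ℂ} (hz : z ∈ ℍₒ) :
    smIter k f (n + 1) z = (1 / (2 * (Real.pi : ℂ) * I)) *
      (smIter (k + 2) (deriv f) n z + k * (smIter (k + 1) f n z * (z - conj z)⁻¹)) := by
  induction n generalizing z with
  | zero =>
    show smDeriv _ f z = _
    rw [smDeriv_eq_of_differentiableAt
      (hf.differentiableAt (isOpen_upperHalfPlaneSet.mem_nhds hz))]
    simp [smIter, div_eq_mul_inv, mul_assoc]
  | succ n ih =>
    set A := smIter (k + 2) (deriv f) n
    set B := smIter (k + 1) f n
    have hA : DifferentiableAt ℝ A z :=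
      differentiableAt_smIter (hf.deriv isOpen_upperHalfPlaneSet) _ n hz
    have hB : DifferentiableAt ℝ B z := differentiableAt_smIter hf _ n hz
    have hBu : DifferentiableAt ℝ (fun w => B w * (w - conj w)⁻¹) z :=
      hB.mul (differentiableAt_sub_conj.inv (sub_conj_ne_zero hz.ne'))
    have hloc : smIter k f (n + 1) =ᶠ[𝓝 z]
        fun w => (1 / (2 * (Real.pi : ℂ) * I)) * (A w + k * (B w * (w - conj w)⁻¹)) :=
      eventually_of_mem (isOpen_upperHalfPlaneSet.mem_nhds hz) fun w hw => ih hw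
    have hwA : (k : ℂ) + 2 * (n + 1 : ℕ) = ((k + 2 : ℤ) : ℂ) + 2 * n := by push_cast; ring
    have hwB : (k : ℂ) + 2 * (n + 1 : ℕ) - 1 = ((k + 1 : ℤ) : ℂ) + 2 * n := by push_cast; ring
    rw [smIter_succ, smDeriv_congr hloc, smDeriv_const_mul _ (hA.fun_add (hBu.const_mul _)),
      smDeriv_add hA (hBu.const_mul _), smDeriv_const_mul _ hBu,
      smDeriv_mul_inv_sub_conj hB hz.ne', hwB, hwA]
    rfl

section Cayley

variable {p w z : ℂ}

lemma zmap_zero (p : ℂ) : zmap p 0 = p := by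
  simp [zmap]

lemma ne_one_of_mem_ball (hw : w ∈ Metric.ball (0 : ℂ) 1) : w ≠ 1 := by
  rintro rfl
  simp at hw

lemma im_zmap (p w : ℂ) : (zmap p w).im = p.im * (1 - normSq w) / normSq (w - 1) := by
  simp only [zmap, div_im, normSq_apply, sub_re, sub_im, mul_re, mul_im, conj_re, conj_im,
    one_re, one_im]
  ring

lemma zmap_mem_upperHalfPlaneSet (hp : 0 < p.im) (hw : w ∈ Metric.ball (0 : ℂ) 1) :
    zmap p w ∈ ℍₒ := by
  have hw' : normSq w < 1 := by
    rw [normSq_eq_norm_sq, sq_lt_one_iff₀ (norm_nonneg w)]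
    simpa using hw
  show 0 < (zmap p w).im
  rw [im_zmap]
  exact div_pos (mul_pos hp (sub_pos.mpr hw'))
    (normSq_pos.mpr (sub_ne_zero.mpr (ne_one_of_mem_ball hw)))

lemma normSq_sub_conj_eq (z p : ℂ) : normSq (z - conj p) = normSq (z - p) + 4 * z.im * p.im := by
  simp only [normSq_apply, sub_re, sub_im, conj_re, conj_im]
  ring

lemma sub_conj_ne_zero_of_im_pos (hp : 0 < p.im) (hz : 0 < z.im) : z - conj p ≠ 0 := by
  rw [← normSq_pos, normSq_sub_conj_eq]
  nlinarith [normSq_nonneg (z - p), mul_pos hz hp]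

lemma wmap_mem_ball (hp : 0 < p.im) (hz : 0 < z.im) : wmap p z ∈ Metric.ball (0 : ℂ) 1 := by
  rw [mem_ball_zero_iff, wmap, norm_div, div_lt_one (norm_pos_iff.mpr
    (sub_conj_ne_zero_of_im_pos hp hz)), ← sq_lt_sq₀ (norm_nonneg _) (norm_nonneg _),
    ← normSq_eq_norm_sq, ← normSq_eq_norm_sq, normSq_sub_conj_eq]
  nlinarith

lemma zmap_wmap (hp : 0 < p.im) (hz : 0 < z.im) : zmap p (wmap p z) = z := by
  have hz' := sub_conj_ne_zero_of_im_pos hp hz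
  have hp' : conj p - p ≠ 0 := by
    rw [← neg_sub]
    exact neg_ne_zero.mpr (sub_conj_ne_zero hp.ne')
  rw [zmap, wmap]
  field_simp
  rw [div_eq_iff (by rwa [sub_sub_sub_cancel_left])]
  ring

lemma hasDerivAt_zmap (p : ℂ) (hw : w ≠ 1) :
    HasDerivAt (zmap p) ((p - conj p) / (1 - w) ^ 2) w := by
  have h := (((hasDerivAt_id' w).const_mul (conj p)).sub_const p).fun_div
    ((hasDerivAt_id' w).sub_const 1) (sub_ne_zero.mpr hw)
  refine h.congr_deriv ?_
  rw [show (1 - w) ^ 2 = (w - 1) ^ 2 by ring]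
  field_simp [sub_ne_zero.mpr hw]
  ring

end Cayley

noncomputable def cayleyLift (p : ℂ) (m : ℕ) (g : ℂ → ℂ) (w : ℂ) : ℂ :=
  g (zmap p w) / (1 - w) ^ m

section cayleyLift

variable {p : ℂ} {m : ℕ} {g : ℂ → ℂ}

lemma differentiableOn_cayleyLift (hp : 0 < p.im) (hg : DifferentiableOn ℂ g ℍₒ) :
    DifferentiableOn ℂ (cayleyLift p m g) (Metric.ball 0 1) := by
  intro w hw
  have hw1 := ne_one_of_mem_ball hw
  have hgz : DifferentiableAt ℂ g (zmap p w) :=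
    hg.differentiableAt (isOpen_upperHalfPlaneSet.mem_nhds (zmap_mem_upperHalfPlaneSet hp hw))
  refine ((hgz.comp w (hasDerivAt_zmap p hw1).differentiableAt).div
    ((differentiableAt_const 1).sub differentiableAt_id |>.pow m)
    (pow_ne_zero m (sub_ne_zero.mpr hw1.symm))).differentiableWithinAt

lemma contDiffAt_cayleyLift (hp : 0 < p.im) (hg : DifferentiableOn ℂ g ℍₒ) (n : ℕ) :
    ContDiffAt ℂ n (cayleyLift p m g) 0 :=
  (differentiableOn_cayleyLift hp hg).contDiffOn Metric.isOpen_ball |>.contDiffAt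
    (Metric.ball_mem_nhds 0 one_pos)

lemma hasDerivAt_cayleyLift (hp : 0 < p.im) (hg : DifferentiableOn ℂ g ℍₒ) {w : ℂ}
    (hw : w ∈ Metric.ball (0 : ℂ) 1) :
    HasDerivAt (cayleyLift p m g)
      ((p - conj p) * cayleyLift p (m + 2) (deriv g) w + m * cayleyLift p (m + 1) g w) w := by
  have hw1 := ne_one_of_mem_ball hw
  have hgz : DifferentiableAt ℂ g (zmap p w) :=
    hg.differentiableAt (isOpen_upperHalfPlaneSet.mem_nhds (zmap_mem_upperHalfPlaneSet hp hw))
  have h := (hgz.hasDerivAt.comp w (hasDerivAt_zmap p hw1)).fun_div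
    (((hasDerivAt_id' w).const_sub 1).pow m) (pow_ne_zero m (sub_ne_zero.mpr hw1.symm))
  refine h.congr_deriv ?_
  simp only [cayleyLift, Pi.pow_apply, Function.comp_apply]
  have h1w : 1 - w ≠ 0 := sub_ne_zero.mpr hw1.symm
  rcases m with _ | m
  · field_simp
    ring
  · simp only [Nat.add_sub_cancel]
    push_cast
    field_simp
    ring

end cayleyLift

lemma two_pi_I_mul_sub_conj (p : ℂ) :
    2 * (Real.pi : ℂ) * I * (p - conj p) = -4 * (Real.pi : ℂ) * (p.im : ℂ) := by
  rw [sub_conj]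
  push_cast
  linear_combination 4 * (Real.pi : ℂ) * (p.im : ℂ) * I_sq

lemma iteratedDeriv_cayleyLift_zero {p : ℂ} (hp : 0 < p.im) {m : ℕ} {g : ℂ → ℂ}
    (hg : DifferentiableOn ℂ g ℍₒ) (n : ℕ) :
    iteratedDeriv n (cayleyLift p m g) 0 =
      smIter m g n p * (-4 * (Real.pi : ℂ) * (p.im : ℂ)) ^ n := by
  induction n generalizing m g with
  | zero => simp [cayleyLift, zmap_zero, smIter]
  | succ n ih =>
    have hg' := hg.deriv isOpen_upperHalfPlaneSet
    have hderiv : deriv (cayleyLift p m g) =ᶠ[𝓝 0] fun w =>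
        (p - conj p) * cayleyLift p (m + 2) (deriv g) w + m * cayleyLift p (m + 1) g w :=
      eventually_of_mem (Metric.ball_mem_nhds 0 one_pos) fun w hw =>
        (hasDerivAt_cayleyLift hp hg hw).deriv
    rw [iteratedDeriv_succ', hderiv.iteratedDeriv_eq, iteratedDeriv_fun_add
      (contDiffAt_const.mul (contDiffAt_cayleyLift hp hg' n))
      (contDiffAt_const.mul (contDiffAt_cayleyLift hp hg n)),
      iteratedDeriv_const_mul_field, iteratedDeriv_const_mul_field, ih hg', ih hg,
      smIter_succ_eq_smIter_deriv hg _ _ hp, ← two_pi_I_mul_sub_conj]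
    have hne := sub_conj_ne_zero hp.ne'
    push_cast
    field_simp
    ring

theorem taylor_coeffs_eq_smIter (k : ℕ) (f : ℂ → ℂ)
    (hf : ∀ z : ℂ, 0 < z.im → DifferentiableAt ℂ f z)
    (p : ℂ) (hp : 0 < p.im) :
    DifferentiableOn ℂ (fun w : ℂ => f (zmap p w) / (1 - w) ^ k) (Metric.ball 0 1) ∧
    (∀ n : ℕ,
      iteratedDeriv n (fun w : ℂ => f (zmap p w) / (1 - w) ^ k) 0 / (n.factorial : ℂ) =
        smIter (k : ℤ) f n p / (n.factorial : ℂ) *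
          (-4 * (Real.pi : ℂ) * (p.im : ℂ)) ^ n) ∧
    (∀ z : ℂ, 0 < z.im → ∃ S : ℂ,
      HasSum (fun n : ℕ =>
        (smIter (k : ℤ) f n p / (n.factorial : ℂ) *
          (-4 * (Real.pi : ℂ) * (p.im : ℂ)) ^ n) * wmap p z ^ n) S ∧
      f z = (1 - wmap p z) ^ k * S) := by
  have hf' : DifferentiableOn ℂ f ℍₒ := fun z hz => (hf z hz).differentiableWithinAt
  have hcoeff (n : ℕ) : iteratedDeriv n (cayleyLift p k f) 0 / n.factorial =
      smIter k f n p / n.factorial * (-4 * (Real.pi : ℂ) * (p.im : ℂ)) ^ n := by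
    rw [iteratedDeriv_cayleyLift_zero hp hf' n, div_mul_eq_mul_div]
  refine ⟨differentiableOn_cayleyLift hp hf', hcoeff, fun z hz => ?_⟩
  have hw := wmap_mem_ball hp hz
  have htaylor := Complex.hasSum_taylorSeries_on_ball
    (differentiableOn_cayleyLift (m := k) hp hf') hw
  rw [cayleyLift, zmap_wmap hp hz] at htaylor
  refine ⟨f z / (1 - wmap p z) ^ k, ?_, ?_⟩
  · refine htaylor.congr_fun fun n => ?_
    rw [← hcoeff, smul_eq_mul, smul_eq_mul, sub_zero]
    ring
  · rw [mul_div_cancel₀ _ (pow_ne_zero _ (sub_ne_zero.mpr (ne_one_of_mem_ball hw).symm))]
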